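/- Suppose N > 0 and k·N ≥ 1, and suppose there exist a real number β and a continuous function W : [r_i, r_o] → ℝ such that r·Q'(r) = W(r)·(U(r) − β) for all r ∈ [r_i, r_o] and 0 ≤ W(r) ≤ (π/ln η)²/(N² + r_o²) + 1/N² for all r ∈ [r_i, r_o] (the Kelvin–Arnol'd II condition for non-axisymmetric disturbances in an annulus). Then G(r) = 0 for all r ∈ [r_i, r_o]; that is, no nontrivial solution with Im c ≠ 0 exists. -/

import Mathlib

/-!
Multiplying the Rayleigh equation by the conjugate of `H = r G` and integrating by parts gives
`∫ (p |H'|² + k² |H|² / r) = ∫ W ζ |H|² / r`, where `p = r / (N² + r²)` and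
`ζ = (U - β) / (U - c)`. Since
`Re ζ + (β - c_r) / c_i · Im ζ = ((U - c_r)² - (β - c_r)²) / |U - c|²`
is bounded by some `κ < 1`, the right-hand side is at most `κ ∫ W |H|² / r`. On the other hand,
the logarithmic Wirtinger inequality `(π / ln η)² ∫ |H|² / r ≤ ∫ r |H'|²`, together with
`r ≤ (N² + r_o²) p` and `k² ≥ 1 / N²`, bounds the left-hand side below by `C ∫ |H|² / r`, where
`C` is the upper bound of `W`. Hence `∫ |H|² / r = 0`.

The Wirtinger inequality follows from Picone's identity with the Riccati solution
`φ = -ω tan (ω (ln r - μ))` for `ω < π / ln (r_o / r_i)`, and a limit `ω → π / ln (r_o / r_i)`.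
-/

open Real MeasureTheory Set intervalIntegral

section Wirtinger

variable {E : Type*} [NormedAddCommGroup E] [InnerProductSpace ℝ E]

theorem two_mul_mul_inner_le {x : ℝ} (hx : 0 < x) (φ : ℝ) (h d : E) :
    2 * φ * inner ℝ h d ≤ x * ‖d‖ ^ 2 + φ ^ 2 * ‖h‖ ^ 2 / x := by
  have hcs : φ * inner ℝ h d ≤ |φ| * (‖h‖ * ‖d‖) :=
    (le_abs_self _).trans (by rw [abs_mul]; gcongr; exact abs_real_inner_le_norm h d)
  rw [← sub_nonneg]
  have hsq : 0 ≤ (x * ‖d‖ - |φ| * ‖h‖) ^ 2 / x := by positivity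
  calc (0 : ℝ) ≤ (x * ‖d‖ - |φ| * ‖h‖) ^ 2 / x + 2 * (|φ| * (‖h‖ * ‖d‖) - φ * inner ℝ h d) := by
        linarith
    _ = _ := by field_simp; linear_combination ‖h‖ ^ 2 * sq_abs φ

theorem sq_mul_integral_norm_sq_div_le_of_riccati {a b ω : ℝ} {φ : ℝ → ℝ} {H D : ℝ → E}
    (ha : 0 < a) (hab : a ≤ b) (hφc : ContinuousOn φ (Icc a b))
    (hφ : ∀ x ∈ Ioo a b, HasDerivAt φ (-(ω ^ 2 + φ x ^ 2) / x) x)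
    (hHc : ContinuousOn H (Icc a b)) (hH : ∀ x ∈ Ioo a b, HasDerivAt H (D x) x)
    (hDc : ContinuousOn D (Icc a b)) (hHa : H a = 0) (hHb : H b = 0) :
    ω ^ 2 * ∫ x in a..b, ‖H x‖ ^ 2 / x ≤ ∫ x in a..b, x * ‖D x‖ ^ 2 := by
  have hx : ∀ x ∈ Icc a b, x ≠ 0 := fun x hx => (ha.trans_le hx.1).ne'
  have hHc' : ContinuousOn (fun x => ‖H x‖ ^ 2) (Icc a b) :=
    (continuous_norm.comp_continuousOn hHc).pow 2
  have hD2 : ContinuousOn (fun x => x * ‖D x‖ ^ 2) (Icc a b) :=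
    continuousOn_id.mul ((continuous_norm.comp_continuousOn hDc).pow 2)
  have hH2 : ContinuousOn (fun x => ω ^ 2 * (‖H x‖ ^ 2 / x)) (Icc a b) :=
    continuousOn_const.mul (hHc'.div continuousOn_id hx)
  -- Picone: `φ ‖H‖²` vanishes at both ends, and completing the square bounds its derivative.
  have hψ := sub_le_integral_of_hasDeriv_right_of_le hab (g := fun x => φ x * ‖H x‖ ^ 2)
    (φ := fun x => x * ‖D x‖ ^ 2 - ω ^ 2 * (‖H x‖ ^ 2 / x)) (hφc.mul hHc')
    (fun x hx => ((hφ x hx).mul (hH x hx).norm_sq).hasDerivWithinAt)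
    ((hD2.sub hH2).integrableOn_Icc)
    (fun x hx => by
      have := two_mul_mul_inner_le (ha.trans hx.1) (φ x) (H x) (D x)
      have : -(ω ^ 2 + φ x ^ 2) / x * ‖H x‖ ^ 2
          = -(ω ^ 2 * (‖H x‖ ^ 2 / x)) - φ x ^ 2 * ‖H x‖ ^ 2 / x := by
        ring
      linarith)
  rw [integral_sub (hD2.intervalIntegrable_of_Icc hab) (hH2.intervalIntegrable_of_Icc hab),
    intervalIntegral.integral_const_mul] at hψ
  simp only [hHa, hHb, norm_zero] at hψ
  linarith

theorem hasDerivAt_neg_mul_tan_mul_log_sub {ω μ x : ℝ} (hx : 0 < x)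
    (hcos : cos (ω * (log x - μ)) ≠ 0) :
    HasDerivAt (fun y => -ω * tan (ω * (log y - μ)))
      (-(ω ^ 2 + (-ω * tan (ω * (log x - μ))) ^ 2) / x) x := by
  have hθ : HasDerivAt (fun y => ω * (log y - μ)) (ω / x) x := by
    simpa [div_eq_mul_inv] using ((hasDerivAt_log hx.ne').sub_const μ).const_mul ω
  refine (((hasDerivAt_tan hcos).comp x hθ).const_mul (-ω)).congr_deriv ?_
  rw [tan_eq_sin_div_cos]
  field_simp
  linear_combination ω ^ 2 * sin_sq_add_cos_sq (ω * (log x - μ))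

theorem sq_mul_integral_norm_sq_div_le_of_mul_log_lt {a b ω : ℝ} {H D : ℝ → E}
    (ha : 0 < a) (hab : a ≤ b) (hω : 0 ≤ ω) (hωπ : ω * log (b / a) < π)
    (hHc : ContinuousOn H (Icc a b)) (hH : ∀ x ∈ Ioo a b, HasDerivAt H (D x) x)
    (hDc : ContinuousOn D (Icc a b)) (hHa : H a = 0) (hHb : H b = 0) :
    ω ^ 2 * ∫ x in a..b, ‖H x‖ ^ 2 / x ≤ ∫ x in a..b, x * ‖D x‖ ^ 2 := by
  set μ := (log a + log b) / 2 with hμ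
  have hcos : ∀ x ∈ Icc a b, cos (ω * (log x - μ)) ≠ 0 := by
    intro x hx
    have hla : ω * (log a - μ) ≤ ω * (log x - μ) :=
      mul_le_mul_of_nonneg_left (by linarith [log_le_log ha hx.1]) hω
    have hlb : ω * (log x - μ) ≤ ω * (log b - μ) :=
      mul_le_mul_of_nonneg_left (by linarith [log_le_log (ha.trans_le hx.1) hx.2]) hω
    have hsymm : ω * (log b - μ) = -(ω * (log a - μ)) := by rw [hμ]; ring
    have hwidth : ω * (log b - μ) = ω * log (b / a) / 2 := by
      rw [hμ, log_div (ha.trans_le hab).ne' ha.ne']; ring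
    refine (cos_pos_of_mem_Ioo ⟨?_, ?_⟩).ne' <;> linarith
  have hφ : ∀ x ∈ Icc a b, HasDerivAt (fun y => -ω * tan (ω * (log y - μ)))
      (-(ω ^ 2 + (-ω * tan (ω * (log x - μ))) ^ 2) / x) x := fun x hx =>
    hasDerivAt_neg_mul_tan_mul_log_sub (ha.trans_le hx.1) (hcos x hx)
  exact sq_mul_integral_norm_sq_div_le_of_riccati ha hab
    (fun x hx => (hφ x hx).continuousAt.continuousWithinAt)
    (fun x hx => hφ x (Ioo_subset_Icc_self hx)) hHc hH hDc hHa hHb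

theorem sq_pi_div_log_mul_integral_norm_sq_div_le {a b : ℝ} {H D : ℝ → E}
    (ha : 0 < a) (hab : a < b)
    (hHc : ContinuousOn H (Icc a b)) (hH : ∀ x ∈ Ioo a b, HasDerivAt H (D x) x)
    (hDc : ContinuousOn D (Icc a b)) (hHa : H a = 0) (hHb : H b = 0) :
    (π / log (b / a)) ^ 2 * ∫ x in a..b, ‖H x‖ ^ 2 / x ≤ ∫ x in a..b, x * ‖D x‖ ^ 2 := by
  have hL : 0 < log (b / a) := log_pos ((one_lt_div ha).mpr hab)
  have hlim : Filter.Tendsto (fun ω : ℝ => ω ^ 2 * ∫ x in a..b, ‖H x‖ ^ 2 / x)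
      (nhdsWithin (π / log (b / a)) (Iio (π / log (b / a))))
      (nhds ((π / log (b / a)) ^ 2 * ∫ x in a..b, ‖H x‖ ^ 2 / x)) :=
    ((continuous_pow 2).mul continuous_const).continuousWithinAt
  refine le_of_tendsto hlim ?_
  filter_upwards [Ioo_mem_nhdsLT (div_pos pi_pos hL)] with ω hω
  exact sq_mul_integral_norm_sq_div_le_of_mul_log_lt ha hab.le hω.1.le
    ((lt_div_iff₀ hL).mp hω.2) hHc hH hDc hHa hHb

theorem mul_integral_norm_sq_div_le_of_one_le_mul {a b N k : ℝ} {H D : ℝ → E}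
    (ha : 0 < a) (hab : a < b) (hkN : 1 ≤ k * N)
    (hHc : ContinuousOn H (Icc a b)) (hH : ∀ x ∈ Ioo a b, HasDerivAt H (D x) x)
    (hDc : ContinuousOn D (Icc a b)) (hHa : H a = 0) (hHb : H b = 0) :
    ((π / log (a / b)) ^ 2 / (N ^ 2 + b ^ 2) + 1 / N ^ 2) * ∫ x in a..b, ‖H x‖ ^ 2 / x
      ≤ ∫ x in a..b, (k ^ 2 * (‖H x‖ ^ 2 / x) + x / (N ^ 2 + x ^ 2) * ‖D x‖ ^ 2) := by
  have hpos : ∀ x ∈ Icc a b, 0 < x := fun x hx => ha.trans_le hx.1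
  have hN : N ≠ 0 := by rintro rfl; simp at hkN; linarith
  have hHc' : ContinuousOn (fun x => ‖H x‖ ^ 2 / x) (Icc a b) :=
    ((continuous_norm.comp_continuousOn hHc).pow 2).div continuousOn_id fun x hx => (hpos x hx).ne'
  have hDc' : ContinuousOn (fun x => ‖D x‖ ^ 2) (Icc a b) :=
    (continuous_norm.comp_continuousOn hDc).pow 2
  have hpD : ContinuousOn (fun x => x / (N ^ 2 + x ^ 2) * ‖D x‖ ^ 2) (Icc a b) :=
    (continuousOn_id.div (by fun_prop) fun x hx => by have := hpos x hx; positivity).mul hDc'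
  have hI : 0 ≤ ∫ x in a..b, ‖H x‖ ^ 2 / x :=
    integral_nonneg hab.le fun x hx => by have := hpos x hx; positivity
  have hwirt := sq_pi_div_log_mul_integral_norm_sq_div_le ha hab hHc hH hDc hHa hHb
  have hweight : ∫ x in a..b, x * ‖D x‖ ^ 2
      ≤ (N ^ 2 + b ^ 2) * ∫ x in a..b, x / (N ^ 2 + x ^ 2) * ‖D x‖ ^ 2 := by
    rw [← intervalIntegral.integral_const_mul]
    refine integral_mono_on hab.le ((continuousOn_id.mul hDc').intervalIntegrable_of_Icc hab.le)
      ((continuousOn_const.mul hpD).intervalIntegrable_of_Icc hab.le) fun x hx => ?_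
    have := hpos x hx
    rw [← mul_assoc, mul_div_assoc']
    gcongr
    rw [le_div_iff₀ (by positivity)]
    nlinarith [mul_le_mul_of_nonneg_left (pow_le_pow_left₀ this.le hx.2 2) this.le]
  have hk : 1 / N ^ 2 ≤ k ^ 2 := by
    rw [div_le_iff₀ (by positivity)]; nlinarith
  have hlog : (π / log (a / b)) ^ 2 = (π / log (b / a)) ^ 2 := by
    rw [← inv_div b a, log_inv, div_neg, neg_sq]
  have hwirt' : (π / log (b / a)) ^ 2 / (N ^ 2 + b ^ 2) * ∫ x in a..b, ‖H x‖ ^ 2 / x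
      ≤ ∫ x in a..b, x / (N ^ 2 + x ^ 2) * ‖D x‖ ^ 2 := by
    rw [div_mul_eq_mul_div, div_le_iff₀ (by positivity)]
    linarith
  have hHc'' : ContinuousOn (fun x => k ^ 2 * (‖H x‖ ^ 2 / x)) (Icc a b) :=
    continuousOn_const.mul hHc'
  rw [integral_add (hHc''.intervalIntegrable_of_Icc hab.le) (hpD.intervalIntegrable_of_Icc hab.le),
    intervalIntegral.integral_const_mul, hlog, add_mul]
  linarith [mul_le_mul_of_nonneg_right hk hI]

end Wirtinger

theorem eqOn_zero_of_integral_norm_sq_div_eq_zero {E : Type*} [NormedAddCommGroup E] {a b : ℝ}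
    {H : ℝ → E} (ha : 0 < a) (hab : a < b) (hH : ContinuousOn H (Icc a b))
    (h : ∫ x in a..b, ‖H x‖ ^ 2 / x = 0) :
    EqOn H 0 (Icc a b) := by
  intro r hr
  by_contra hHr
  have hpos : ∀ x ∈ Icc a b, 0 < x := fun x hx => ha.trans_le hx.1
  refine (integral_pos hab (ContinuousOn.div (by fun_prop) continuousOn_id
    fun x hx => (hpos x hx).ne') (fun x hx => ?_) ⟨r, hr, ?_⟩).ne' h
  · exact div_nonneg (sq_nonneg _) (hpos x (Ioc_subset_Icc_self hx)).le
  · exact div_pos (pow_pos (norm_pos_iff.mpr hHr) 2) (hpos r hr)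

theorem integral_mul_norm_sq_add_mul_norm_sq_eq_zero {𝕜 : Type*} [RCLike 𝕜] {a b : ℝ}
    (hab : a ≤ b) {p : ℝ → ℝ} {V H D : ℝ → 𝕜}
    (hp : ContinuousOn p (Icc a b)) (hV : ContinuousOn V (Icc a b))
    (hHc : ContinuousOn H (Icc a b)) (hH : ∀ x ∈ Ioo a b, HasDerivAt H (D x) x)
    (hDc : ContinuousOn D (Icc a b))
    (hpD : ∀ x ∈ Ioo a b, HasDerivAt (fun y => (p y : 𝕜) * D y) (V x * H x) x)
    (hHa : H a = 0) (hHb : H b = 0) :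
    ∫ x in a..b, (V x * ‖H x‖ ^ 2 + p x * ‖D x‖ ^ 2 : 𝕜) = 0 := by
  have hp' : ContinuousOn (fun x => (p x : 𝕜)) (Icc a b) :=
    RCLike.continuous_ofReal.comp_continuousOn hp
  have hF : ∀ x ∈ Ioo a b, HasDerivAt (fun y => (p y : 𝕜) * D y * star (H y))
      (V x * ‖H x‖ ^ 2 + p x * ‖D x‖ ^ 2) x := fun x hx => by
    refine ((hpD x hx).mul (hH x hx).star).congr_deriv ?_
    simp only [RCLike.star_def, mul_assoc, RCLike.mul_conj]
  rw [integral_eq_sub_of_hasDerivAt_of_le hab ((hp'.mul hDc).mul hHc.star) hF]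
  · simp [hHa, hHb]
  · have hnorm : ∀ {f : ℝ → 𝕜}, ContinuousOn f (Icc a b) →
        ContinuousOn (fun x => (‖f x‖ : 𝕜) ^ 2) (Icc a b) := fun hf =>
      (RCLike.continuous_ofReal.comp_continuousOn (continuous_norm.comp_continuousOn hf)).pow 2
    exact ((hV.mul (hnorm hHc)).add (hp'.mul (hnorm hDc))).intervalIntegrable_of_Icc hab

theorem ContDiffOn.hasDerivAt_derivWithin_Icc {E : Type*} [NormedAddCommGroup E] [NormedSpace ℝ E]
    {f : ℝ → E} {a b x : ℝ} {n : WithTop ℕ∞} (hf : ContDiffOn ℝ n f (Icc a b)) (hn : n ≠ 0)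
    (hx : x ∈ Ioo a b) : HasDerivAt f (derivWithin f (Icc a b) x) x := by
  have hS : Icc a b ∈ nhds x := Icc_mem_nhds hx.1 hx.2
  rw [derivWithin_of_mem_nhds hS]
  exact ((hf.differentiableOn hn) x (Ioo_subset_Icc_self hx)).differentiableAt hS |>.hasDerivAt

theorem hasDerivAt_mul_derivWithin_Icc {𝔸 : Type*} [NormedRing 𝔸] [NormedAlgebra ℝ 𝔸]
    {P H : ℝ → 𝔸} {a b x : ℝ} (hab : a < b)
    (hP : ContDiffOn ℝ 1 P (Icc a b)) (hH : ContDiffOn ℝ 2 H (Icc a b)) (hx : x ∈ Ioo a b) :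
    HasDerivAt (fun s => P s * derivWithin H (Icc a b) s)
      (deriv (fun s => P s * deriv H s) x) x := by
  have hPD : ContDiffOn ℝ 1 (fun s => P s * derivWithin H (Icc a b) s) (Icc a b) :=
    hP.mul (hH.derivWithin (uniqueDiffOn_Icc hab) le_rfl)
  have heq : (fun s => P s * derivWithin H (Icc a b) s) =ᶠ[nhds x] fun s => P s * deriv H s := by
    filter_upwards [Ioo_mem_nhds hx.1 hx.2] with s hs
    rw [derivWithin_of_mem_nhds (Icc_mem_nhds hs.1 hs.2)]
  rw [← heq.deriv_eq]
  exact ((hPD.differentiableOn one_ne_zero) x (Ioo_subset_Icc_self hx)).differentiableAt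
    (Icc_mem_nhds hx.1 hx.2) |>.hasDerivAt

theorem re_add_mul_im_sub_div_sub_le {u β M : ℝ} {c : ℂ} (hc : c.im ≠ 0)
    (hu : (u - c.re) ^ 2 ≤ M) :
    (((u : ℂ) - β) / (u - c)).re + (β - c.re) / c.im * (((u : ℂ) - β) / (u - c)).im
      ≤ M / (M + c.im ^ 2) := by
  have hci : 0 < c.im ^ 2 := by positivity
  have hm : 0 < (u - c.re) ^ 2 + c.im ^ 2 := by positivity
  have hM : 0 < M + c.im ^ 2 := by nlinarith [sq_nonneg (u - c.re)]
  have hval : (((u : ℂ) - β) / (u - c)).re + (β - c.re) / c.im * (((u : ℂ) - β) / (u - c)).im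
      = ((u - c.re) ^ 2 - (β - c.re) ^ 2) / ((u - c.re) ^ 2 + c.im ^ 2) := by
    simp only [Complex.div_re, Complex.div_im, Complex.normSq_apply, Complex.sub_re,
      Complex.sub_im, Complex.ofReal_re, Complex.ofReal_im]
    field_simp
    ring
  rw [hval, div_le_div_iff₀ hm hM]
  nlinarith [sq_nonneg (β - c.re), mul_le_mul_of_nonneg_left hu hci.le]

theorem exists_lt_one_re_add_mul_im_sub_div_sub_le {a b β : ℝ} {c : ℂ} {U : ℝ → ℝ}
    (hc : c.im ≠ 0) (hab : a ≤ b) (hU : ContinuousOn U (Icc a b)) :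
    ∃ κ ∈ Ico (0 : ℝ) 1, ∀ x ∈ Icc a b,
      (((U x : ℂ) - β) / (U x - c)).re + (β - c.re) / c.im * (((U x : ℂ) - β) / (U x - c)).im
        ≤ κ := by
  obtain ⟨M, hM⟩ := isCompact_Icc.exists_bound_of_continuousOn
    ((hU.sub continuousOn_const).pow 2 : ContinuousOn (fun x => (U x - c.re) ^ 2) (Icc a b))
  have hM' : ∀ x ∈ Icc a b, (U x - c.re) ^ 2 ≤ M := fun x hx => (le_abs_self _).trans (hM x hx)
  have hM0 : 0 ≤ M := (sq_nonneg _).trans (hM' a ⟨le_rfl, hab⟩)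
  have hci : 0 < c.im ^ 2 := by positivity
  exact ⟨M / (M + c.im ^ 2), ⟨by positivity, (div_lt_one (by positivity)).mpr (by linarith)⟩,
    fun x hx => re_add_mul_im_sub_div_sub_le hc (hM' x hx)⟩

theorem ofReal_sub_ne_zero_of_im_ne_zero {c : ℂ} (hc : c.im ≠ 0) (u : ℝ) : (u : ℂ) - c ≠ 0 :=
  fun h => hc (by simpa using congrArg Complex.im h.symm)

section Rayleigh

variable {ri ro k β : ℝ} {c : ℂ} {p U Q W : ℝ → ℝ} {G : ℝ → ℂ}

theorem continuousOn_rayleigh_potential (hri : 0 < ri) (hc : c.im ≠ 0)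
    (hU : ContinuousOn U (Icc ri ro)) (hW : ContinuousOn W (Icc ri ro)) :
    ContinuousOn (fun x : ℝ => ((k : ℂ) ^ 2 - W x * ((U x - β) / (U x - c))) / x) (Icc ri ro) := by
  have hU' := Complex.continuous_ofReal.comp_continuousOn hU
  exact (continuousOn_const.sub ((Complex.continuous_ofReal.comp_continuousOn hW).mul
    ((hU'.sub continuousOn_const).div (hU'.sub continuousOn_const)
      fun x _ => ofReal_sub_ne_zero_of_im_ne_zero hc (U x)))).div
    Complex.continuous_ofReal.continuousOn
    fun x hx => Complex.ofReal_ne_zero.mpr (hri.trans_le hx.1).ne'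

theorem hasDerivAt_rayleigh (hri : 0 < ri) (hio : ri < ro) (hc : c.im ≠ 0)
    (hp : ContDiffOn ℝ 1 p (Icc ri ro)) (hG : ContDiffOn ℝ 2 G (Icc ri ro))
    (heq : ∀ r ∈ Icc ri ro,
      deriv (fun s : ℝ => (p s : ℂ) * deriv (fun t : ℝ => (t : ℂ) * G t) s) r
        - (k : ℂ) ^ 2 * G r + ((deriv Q r : ℝ) : ℂ) / ((U r : ℂ) - c) * ((r : ℂ) * G r) = 0)
    (hWQ : ∀ r ∈ Icc ri ro, r * deriv Q r = W r * (U r - β)) {x : ℝ} (hx : x ∈ Ioo ri ro) :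
    HasDerivAt (fun s => (p s : ℂ) * derivWithin (fun t : ℝ => (t : ℂ) * G t) (Icc ri ro) s)
      (((k : ℂ) ^ 2 - W x * ((U x - β) / (U x - c))) / x * (x * G x)) x := by
  have hx' : x ∈ Icc ri ro := Ioo_subset_Icc_self hx
  have hx0 : (x : ℂ) ≠ 0 := Complex.ofReal_ne_zero.mpr (hri.trans hx.1).ne'
  have hUc := ofReal_sub_ne_zero_of_im_ne_zero hc (U x)
  have hQ : ((deriv Q x : ℝ) : ℂ) = W x * (U x - β) / x := by
    rw [eq_div_iff hx0, ← Complex.ofReal_mul, mul_comm, hWQ x hx']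
    push_cast
    ring
  have h := heq x hx'
  rw [hQ] at h
  have hp' : ContDiffOn ℝ 1 (fun s => (p s : ℂ)) (Icc ri ro) :=
    Complex.ofRealCLM.contDiff.comp_contDiffOn hp
  have hH : ContDiffOn ℝ 2 (fun t : ℝ => (t : ℂ) * G t) (Icc ri ro) :=
    Complex.ofRealCLM.contDiff.contDiffOn.mul hG
  refine (hasDerivAt_mul_derivWithin_Icc hio hp' hH hx).congr_deriv ?_
  linear_combination (norm := skip) h
  field_simp
  ring

theorem integral_rayleigh_energy_eq_zero (hri : 0 < ri) (hio : ri < ro) (hc : c.im ≠ 0)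
    (hp : ContDiffOn ℝ 1 p (Icc ri ro)) (hU : ContinuousOn U (Icc ri ro))
    (hW : ContinuousOn W (Icc ri ro))
    (hG : ContDiffOn ℝ 2 G (Icc ri ro)) (hGi : G ri = 0) (hGo : G ro = 0)
    (heq : ∀ r ∈ Icc ri ro,
      deriv (fun s : ℝ => (p s : ℂ) * deriv (fun t : ℝ => (t : ℂ) * G t) s) r
        - (k : ℂ) ^ 2 * G r + ((deriv Q r : ℝ) : ℂ) / ((U r : ℂ) - c) * ((r : ℂ) * G r) = 0)
    (hWQ : ∀ r ∈ Icc ri ro, r * deriv Q r = W r * (U r - β)) :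
    ∫ x in ri..ro, (((k : ℂ) ^ 2 - W x * ((U x - β) / (U x - c))) / x * ‖(x : ℂ) * G x‖ ^ 2
      + p x * ‖derivWithin (fun t : ℝ => (t : ℂ) * G t) (Icc ri ro) x‖ ^ 2) = 0 := by
  have hH : ContDiffOn ℝ 2 (fun t : ℝ => (t : ℂ) * G t) (Icc ri ro) :=
    Complex.ofRealCLM.contDiff.contDiffOn.mul hG
  exact integral_mul_norm_sq_add_mul_norm_sq_eq_zero hio.le hp.continuousOn
    (continuousOn_rayleigh_potential hri hc hU hW) hH.continuousOn
    (fun x hx => hH.hasDerivAt_derivWithin_Icc two_ne_zero hx)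
    (hH.continuousOn_derivWithin (uniqueDiffOn_Icc hio) one_le_two)
    (fun x hx => hasDerivAt_rayleigh hri hio hc hp hG heq hWQ hx) (by simp [hGi]) (by simp [hGo])

theorem integral_rayleigh_energy_le (hri : 0 < ri) (hio : ri < ro) (hc : c.im ≠ 0)
    (hp : ContDiffOn ℝ 1 p (Icc ri ro)) (hU : ContinuousOn U (Icc ri ro))
    (hW : ContinuousOn W (Icc ri ro)) (hWlo : ∀ r ∈ Icc ri ro, 0 ≤ W r)
    (hG : ContDiffOn ℝ 2 G (Icc ri ro)) (hGi : G ri = 0) (hGo : G ro = 0)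
    (heq : ∀ r ∈ Icc ri ro,
      deriv (fun s : ℝ => (p s : ℂ) * deriv (fun t : ℝ => (t : ℂ) * G t) s) r
        - (k : ℂ) ^ 2 * G r + ((deriv Q r : ℝ) : ℂ) / ((U r : ℂ) - c) * ((r : ℂ) * G r) = 0)
    (hWQ : ∀ r ∈ Icc ri ro, r * deriv Q r = W r * (U r - β)) {μ κ : ℝ}
    (hκ : ∀ x ∈ Icc ri ro,
      (((U x : ℂ) - β) / (U x - c)).re + μ * (((U x : ℂ) - β) / (U x - c)).im ≤ κ) :
    ∫ x in ri..ro, (k ^ 2 * (‖(x : ℂ) * G x‖ ^ 2 / x)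
        + p x * ‖derivWithin (fun t : ℝ => (t : ℂ) * G t) (Icc ri ro) x‖ ^ 2)
      ≤ κ * ∫ x in ri..ro, W x * (‖(x : ℂ) * G x‖ ^ 2 / x) := by
  set S := Icc ri ro
  set H : ℝ → ℂ := fun t => t * G t
  set D := derivWithin H S
  set ζ : ℝ → ℂ := fun x => (U x - β) / (U x - c)
  have hpos : ∀ x ∈ S, 0 < x := fun x hx => hri.trans_le hx.1
  have hH : ContDiffOn ℝ 2 H S := Complex.ofRealCLM.contDiff.contDiffOn.mul hG
  have hHc : ContinuousOn H S := hH.continuousOn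
  have hDc : ContinuousOn D S := hH.continuousOn_derivWithin (uniqueDiffOn_Icc hio) one_le_two
  have hpc := hp.continuousOn
  set ℓ : ℂ →L[ℝ] ℝ := Complex.reCLM + μ • Complex.imCLM
  set g : ℝ → ℂ := fun x => ((k : ℂ) ^ 2 - W x * ζ x) / x * ‖H x‖ ^ 2 + p x * ‖D x‖ ^ 2
  have hg : ContinuousOn g S := by
    refine ((continuousOn_rayleigh_potential hri hc hU hW).mul ?_).add ?_ <;> fun_prop
  have hℓ : ∫ x in ri..ro, ℓ (g x) = 0 := by
    rw [ℓ.intervalIntegral_comp_comm (hg.intervalIntegrable_of_Icc hio.le)]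
    exact (congrArg ℓ (integral_rayleigh_energy_eq_zero hri hio hc hp hU hW hG hGi hGo heq
      hWQ)).trans (map_zero ℓ)
  have hn : ContinuousOn (fun x => ‖H x‖ ^ 2 / x) S :=
    ContinuousOn.div (by fun_prop) continuousOn_id fun x hx => (hpos x hx).ne'
  rw [← sub_nonpos, ← intervalIntegral.integral_const_mul, ← intervalIntegral.integral_sub, ← hℓ]
  · refine integral_mono_on hio.le (ContinuousOn.intervalIntegrable_of_Icc hio.le (by fun_prop))
      ((ℓ.continuous.comp_continuousOn hg).intervalIntegrable_of_Icc hio.le) fun x hx => ?_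
    have hζ := mul_le_mul_of_nonneg_right (mul_le_mul_of_nonneg_left (hκ x hx) (hWlo x hx))
      (by have := hpos x hx; positivity : 0 ≤ ‖H x‖ ^ 2 / x)
    have hre : (g x).re = (k ^ 2 - W x * (ζ x).re) / x * ‖H x‖ ^ 2 + p x * ‖D x‖ ^ 2 := by
      simp [g, ← Complex.ofReal_pow, Complex.div_ofReal_re]
    have him : (g x).im = -(W x * (ζ x).im) / x * ‖H x‖ ^ 2 := by
      simp [g, ← Complex.ofReal_pow, Complex.div_ofReal_im]
    simp only [ℓ, add_apply, smul_apply, Complex.reCLM_apply, Complex.imCLM_apply, smul_eq_mul,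
      hre, him]
    linear_combination hζ
  · exact ContinuousOn.intervalIntegrable_of_Icc hio.le (by fun_prop)
  · exact (continuousOn_const.mul (hW.mul hn)).intervalIntegrable_of_Icc hio.le

end Rayleigh

theorem stmt_1_general
    (ri ro : ℝ) (hri : 0 < ri) (hio : ri < ro)
    (N k : ℝ) (hN : 0 < N) (hkN : 1 ≤ k * N)
    (c : ℂ) (hc : c.im ≠ 0)
    (U Q : ℝ → ℝ)
    (hU : ContDiffOn ℝ 2 U (Set.Icc ri ro))
    (G : ℝ → ℂ)
    (hG : ContDiffOn ℝ 2 G (Set.Icc ri ro))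
    (hGi : G ri = 0) (hGo : G ro = 0)
    (heq : ∀ r ∈ Set.Icc ri ro,
      deriv (fun s : ℝ => ((s / (N ^ 2 + s ^ 2) : ℝ) : ℂ) *
          deriv (fun t : ℝ => (t : ℂ) * G t) s) r
        - (k : ℂ) ^ 2 * G r
        + ((deriv Q r : ℝ) : ℂ) / ((U r : ℂ) - c) * ((r : ℂ) * G r) = 0)
    (β : ℝ) (W : ℝ → ℝ)
    (hWc : ContinuousOn W (Set.Icc ri ro))
    (hWQ : ∀ r ∈ Set.Icc ri ro, r * deriv Q r = W r * (U r - β))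
    (hWlo : ∀ r ∈ Set.Icc ri ro, 0 ≤ W r)
    (hWhi : ∀ r ∈ Set.Icc ri ro,
      W r ≤ (Real.pi / Real.log (ri / ro)) ^ 2 / (N ^ 2 + ro ^ 2) + 1 / N ^ 2) :
    ∀ r ∈ Set.Icc ri ro, G r = 0 := by
  have hpos : ∀ x ∈ Icc ri ro, 0 < x := fun x hx => hri.trans_le hx.1
  have hp : ContDiffOn ℝ 1 (fun s : ℝ => s / (N ^ 2 + s ^ 2)) (Icc ri ro) :=
    contDiffOn_id.div (by fun_prop) fun x hx => by have := hpos x hx; positivity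
  set H : ℝ → ℂ := fun t => t * G t
  have hH : ContDiffOn ℝ 2 H (Icc ri ro) := Complex.ofRealCLM.contDiff.contDiffOn.mul hG
  obtain ⟨κ, hκ, hζ⟩ :=
    exists_lt_one_re_add_mul_im_sub_div_sub_le (β := β) hc hio.le hU.continuousOn
  have hupper := integral_rayleigh_energy_le hri hio hc hp hU.continuousOn hWc hWlo hG hGi hGo heq
    hWQ hζ
  have hlower := mul_integral_norm_sq_div_le_of_one_le_mul (k := k) hri hio hkN hH.continuousOn
    (fun x hx => hH.hasDerivAt_derivWithin_Icc two_ne_zero hx)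
    (hH.continuousOn_derivWithin (uniqueDiffOn_Icc hio) one_le_two) (by simp [H, hGi])
    (by simp [H, hGo])
  set C := (π / log (ri / ro)) ^ 2 / (N ^ 2 + ro ^ 2) + 1 / N ^ 2
  set I := ∫ x in ri..ro, ‖H x‖ ^ 2 / x
  have hC : 0 < C := by positivity
  have hI : 0 ≤ I := integral_nonneg hio.le fun x hx => by have := hpos x hx; positivity
  have hWI : ∫ x in ri..ro, W x * (‖H x‖ ^ 2 / x) ≤ C * I := by
    have hHc := hH.continuousOn
    have hn : ContinuousOn (fun x => ‖H x‖ ^ 2 / x) (Icc ri ro) :=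
      ContinuousOn.div (by fun_prop) continuousOn_id fun x hx => (hpos x hx).ne'
    rw [← intervalIntegral.integral_const_mul]
    exact integral_mono_on hio.le ((hWc.mul hn).intervalIntegrable_of_Icc hio.le)
      ((continuousOn_const.mul hn).intervalIntegrable_of_Icc hio.le) fun x hx =>
      mul_le_mul_of_nonneg_right (hWhi x hx) (by have := hpos x hx; positivity)
  have hCI : C * I ≤ κ * (C * I) := hlower.trans (hupper.trans (mul_le_mul_of_nonneg_left hWI hκ.1))
  have hI0 : I = 0 := le_antisymm (nonpos_of_mul_nonpos_right (by nlinarith [hκ.2]) hC) hI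
  intro r hr
  have hHr := eqOn_zero_of_integral_norm_sq_div_eq_zero hri hio hH.continuousOn hI0 hr
  simpa [H, (hpos r hr).ne'] using hHr

/-- Kelvin–Arnol'd II sufficient condition for stability of axisymmetric base
flows in an annulus, non-axisymmetric case (`N > 0`, `k·N ≥ 1`): if there
exist `β` and a continuous `W` with `r Q'(r) = W(r)(U(r) - β)` and
`0 ≤ W ≤ (π/ln η)²/(N² + ro²) + 1/N²` on `[ri, ro]`, then the Rayleigh-type
equation has no nontrivial solution with `Im c ≠ 0`. -/
theorem stmt_1
    (ri ro : ℝ) (hri : 0 < ri) (hio : ri < ro)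
    (N k : ℝ) (hN : 0 < N) (hk : 0 < k) (hkN : 1 ≤ k * N)
    (c : ℂ) (hc : c.im ≠ 0)
    (U Q : ℝ → ℝ)
    (hU : ContDiffOn ℝ 2 U (Set.Icc ri ro))
    (hQ : ∀ r, Q r = -(r * deriv U r) / (N ^ 2 + r ^ 2))
    (G : ℝ → ℂ)
    (hG : ContDiffOn ℝ 2 G (Set.Icc ri ro))
    (hGi : G ri = 0) (hGo : G ro = 0)
    (heq : ∀ r ∈ Set.Icc ri ro,
      deriv (fun s : ℝ => ((s / (N ^ 2 + s ^ 2) : ℝ) : ℂ) *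
          deriv (fun t : ℝ => (t : ℂ) * G t) s) r
        - (k : ℂ) ^ 2 * G r
        + ((deriv Q r : ℝ) : ℂ) / ((U r : ℂ) - c) * ((r : ℂ) * G r) = 0)
    (β : ℝ) (W : ℝ → ℝ)
    (hWc : ContinuousOn W (Set.Icc ri ro))
    (hWQ : ∀ r ∈ Set.Icc ri ro, r * deriv Q r = W r * (U r - β))
    (hWlo : ∀ r ∈ Set.Icc ri ro, 0 ≤ W r)
    (hWhi : ∀ r ∈ Set.Icc ri ro,
      W r ≤ (Real.pi / Real.log (ri / ro)) ^ 2 / (N ^ 2 + ro ^ 2) + 1 / N ^ 2) :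
    ∀ r ∈ Set.Icc ri ro, G r = 0 :=
  stmt_1_general ri ro hri hio N k hN hkN c hc U Q hU G hG hGi hGo heq β W hWc hWQ hWlo hWhi
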